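/- Let g, φ ∈ L²(ℝ; ℂ), let N, M be positive integers, T, Δf > 0, and X : {0,…,N−1}×{0,…,M−1} → ℂ. Define x(t) = Σ_{n'=0}^{N−1} Σ_{m'=0}^{M−1} X[n',m'] φ(t − n'T) e^{2πi m'Δf (t − n'T)} and y(t) = Σ_{i=1}^P h_i e^{2πi ν_i (t − τ_i)} x(t − τ_i) with h_i ∈ ℂ, τ_i, ν_i ∈ ℝ. Assume the pulses are bi-orthogonal robustly to the channel's delay-Doppler shifts: for every i = 1,…,P and all 0 ≤ n, n' ≤ N−1, 0 ≤ m, m' ≤ M−1, A_{g,φ}((n−n')T − τ_i, (m−m')Δf − ν_i) = 1 if (n',m') = (n,m) and = 0 otherwise. Then the sampled cross-ambiguity Y[n,m] := A_{g,y}(nT, mΔf) satisfies Y[n,m] = H[n,m]·X[n,m] for all n, m, where H[n,m] = Σ_{i=1}^P h_i e^{2πi ν_i n T} e^{−2πi(ν_i + mΔf)τ_i}; i.e., time-frequency modulation renders the doubly-dispersive channel multiplicative, with each symbol X[n,m] multiplied by its own fade H[n,m]. -/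

import Mathlib

/-!
The cross-ambiguity function `A_{g,f}` is linear in `f` and covariant under time-frequency
shifts: translating `f` by `a` and modulating by `b` moves `A_{g,f}` by `(a, b)` up to a
unimodular phase. Both the modulator and the channel are finite sums of such shifts, so
`Y[n,m]` is a sum of values of `A_{g,φ}` at `((n - n')T - τᵢ, (m - m')Δf - νᵢ)` with explicit
phases, and bi-orthogonality keeps only the term `(n', m') = (n, m)`.
-/

open MeasureTheory Finset

/-- The cross-ambiguity function
`A_{g,f}(τ,ν) = ∫ conj(g(t−τ)) f(t) e^{−2πi ν (t−τ)} dt`. -/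
noncomputable def crossAmbiguity (g f : ℝ → ℂ) (τ ν : ℝ) : ℂ :=
  ∫ t : ℝ, (starRingEnd ℂ) (g (t - τ)) * f t *
    Complex.exp (-(2 * Real.pi * Complex.I) * ((ν : ℂ) * ((t : ℂ) - (τ : ℂ))))

/-- `T_a M_b f`: the phase `e^{2πi b (t - a)}` is measured from the new origin `a`, as in
the paper's modulator and channel. -/
noncomputable def timeFreqShift (a b : ℝ) (f : ℝ → ℂ) (t : ℝ) : ℂ :=
  Complex.exp (2 * Real.pi * Complex.I * ((b * (t - a) : ℝ) : ℂ)) * f (t - a)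

lemma norm_exp_two_pi_I_mul_ofReal (r : ℝ) :
    ‖Complex.exp (2 * Real.pi * Complex.I * (r : ℂ))‖ = 1 := by
  rw [show 2 * Real.pi * Complex.I * (r : ℂ) = ((2 * Real.pi * r : ℝ) : ℂ) * Complex.I by
    push_cast; ring]
  exact Complex.norm_exp_ofReal_mul_I _

lemma memLp_timeFreqShift {f : ℝ → ℂ} (hf : MemLp f 2 volume) (a b : ℝ) :
    MemLp (timeFreqShift a b f) 2 volume := by
  have hshift : MemLp (fun t => f (t - a)) 2 volume :=
    hf.comp_measurePreserving (measurePreserving_sub_right volume a)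
  refine hshift.of_le ?_ (Filter.Eventually.of_forall fun t => ?_)
  · exact (by fun_prop : Continuous fun t : ℝ =>
      Complex.exp (2 * Real.pi * Complex.I * ((b * (t - a) : ℝ) : ℂ))).aestronglyMeasurable.mul
      hshift.1
  · simp only [timeFreqShift, norm_mul, norm_exp_two_pi_I_mul_ofReal, one_mul, le_refl]

lemma memLp_finsetSum_timeFreqShift {ι : Type*} (s : Finset ι) (c : ι → ℂ) (a b : ι → ℝ)
    {f : ℝ → ℂ} (hf : MemLp f 2 volume) :
    MemLp (fun t => ∑ j ∈ s, c j * timeFreqShift (a j) (b j) f t) 2 volume :=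
  memLp_finsetSum s fun j _ => (memLp_timeFreqShift hf (a j) (b j)).const_mul (c j)

/-- `A_{g,f}(τ,ν)` is the `L²` pairing of `f` with the shifted window `timeFreqShift τ ν g`. -/
lemma conj_timeFreqShift_mul (g f : ℝ → ℂ) (τ ν t : ℝ) :
    (starRingEnd ℂ) (timeFreqShift τ ν g t) * f t =
      (starRingEnd ℂ) (g (t - τ)) * f t *
        Complex.exp (-(2 * Real.pi * Complex.I) * ((ν : ℂ) * ((t : ℂ) - (τ : ℂ)))) := by
  simp only [timeFreqShift, map_mul, ← Complex.exp_conj, map_ofNat, Complex.conj_ofReal,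
    Complex.conj_I]
  push_cast
  ring_nf

lemma integrable_crossAmbiguity_integrand {g f : ℝ → ℂ} (hg : MemLp g 2 volume)
    (hf : MemLp f 2 volume) (τ ν : ℝ) :
    Integrable (fun t => (starRingEnd ℂ) (g (t - τ)) * f t *
      Complex.exp (-(2 * Real.pi * Complex.I) * ((ν : ℂ) * ((t : ℂ) - (τ : ℂ))))) volume :=
  ((memLp_timeFreqShift hg τ ν).star.integrable_mul hf).congr
    (ae_of_all _ (conj_timeFreqShift_mul g f τ ν))

lemma crossAmbiguity_finsetSum_mul {ι : Type*} (s : Finset ι) (c : ι → ℂ) {g : ℝ → ℂ}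
    {f : ι → ℝ → ℂ} (hg : MemLp g 2 volume) (hf : ∀ j ∈ s, MemLp (f j) 2 volume) (τ ν : ℝ) :
    crossAmbiguity g (fun t => ∑ j ∈ s, c j * f j t) τ ν =
      ∑ j ∈ s, c j * crossAmbiguity g (f j) τ ν := by
  unfold crossAmbiguity
  calc _ = ∫ t, ∑ j ∈ s, c j * ((starRingEnd ℂ) (g (t - τ)) * f j t *
          Complex.exp (-(2 * Real.pi * Complex.I) * ((ν : ℂ) * ((t : ℂ) - (τ : ℂ))))) := by
        refine integral_congr_ae (ae_of_all _ fun t => ?_)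
        simp only [mul_sum, sum_mul]
        exact sum_congr rfl fun j _ => by ring
    _ = _ := by
      rw [integral_finsetSum s fun j hj =>
        (integrable_crossAmbiguity_integrand hg (hf j hj) τ ν).const_mul (c j)]
      exact sum_congr rfl fun j _ => integral_const_mul _ _

lemma crossAmbiguity_timeFreqShift (g f : ℝ → ℂ) (a b τ ν : ℝ) :
    crossAmbiguity g (timeFreqShift a b f) τ ν =
      Complex.exp (2 * Real.pi * Complex.I * ((b * (τ - a) : ℝ) : ℂ)) *
        crossAmbiguity g f (τ - a) (ν - b) := by
  unfold crossAmbiguity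
  rw [← integral_const_mul]
  conv_rhs => rw [← integral_sub_right_eq_self _ a]
  refine integral_congr_ae (ae_of_all _ fun t => ?_)
  have hphase : Complex.exp (2 * Real.pi * Complex.I * ((b * (t - a) : ℝ) : ℂ)) *
      Complex.exp (-(2 * Real.pi * Complex.I) * ((ν : ℂ) * ((t : ℂ) - (τ : ℂ)))) =
      Complex.exp (2 * Real.pi * Complex.I * ((b * (τ - a) : ℝ) : ℂ)) *
      Complex.exp (-(2 * Real.pi * Complex.I) *
        (((ν - b : ℝ) : ℂ) * (((t - a : ℝ) : ℂ) - ((τ - a : ℝ) : ℂ)))) := by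
    rw [← Complex.exp_add, ← Complex.exp_add]
    congr 1
    push_cast
    ring
  simp only [timeFreqShift, sub_sub_sub_cancel_right]
  linear_combination (starRingEnd ℂ) (g (t - τ)) * f (t - a) * hphase

lemma crossAmbiguity_finsetSum_timeFreqShift {ι : Type*} (s : Finset ι) (c : ι → ℂ)
    (a b : ι → ℝ) {g f : ℝ → ℂ} (hg : MemLp g 2 volume) (hf : MemLp f 2 volume) (τ ν : ℝ) :
    crossAmbiguity g (fun t => ∑ j ∈ s, c j * timeFreqShift (a j) (b j) f t) τ ν =
      ∑ j ∈ s, c j * Complex.exp (2 * Real.pi * Complex.I * ((b j * (τ - a j) : ℝ) : ℂ)) *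
        crossAmbiguity g f (τ - a j) (ν - b j) := by
  rw [crossAmbiguity_finsetSum_mul s c hg fun j _ => memLp_timeFreqShift hf (a j) (b j)]
  simp only [crossAmbiguity_timeFreqShift, mul_assoc]

noncomputable def tfModulation (φ : ℝ → ℂ) (T Δf : ℝ) (N M : ℕ) (X : ℕ → ℕ → ℂ) (t : ℝ) : ℂ :=
  ∑ p ∈ range N ×ˢ range M, X p.1 p.2 * timeFreqShift (p.1 * T) (p.2 * Δf) φ t

noncomputable def delayDopplerChannel {ι : Type*} [Fintype ι] (h : ι → ℂ) (τ ν : ι → ℝ)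
    (x : ℝ → ℂ) (t : ℝ) : ℂ :=
  ∑ i, h i * timeFreqShift (τ i) (ν i) x t

lemma crossAmbiguity_tfModulation_of_biorthogonal {g φ : ℝ → ℂ} (hg : MemLp g 2 volume)
    (hφ : MemLp φ 2 volume) {N M : ℕ} {T Δf τ₀ ν₀ : ℝ} (X : ℕ → ℕ → ℂ)
    (hbiorth : ∀ n n' m m' : ℕ, n < N → n' < N → m < M → m' < M →
      crossAmbiguity g φ (((n : ℝ) - (n' : ℝ)) * T - τ₀) (((m : ℝ) - (m' : ℝ)) * Δf - ν₀) =
        if n' = n ∧ m' = m then 1 else 0)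
    {n m : ℕ} (hn : n < N) (hm : m < M) :
    crossAmbiguity g (tfModulation φ T Δf N M X) (n * T - τ₀) (m * Δf - ν₀) =
      Complex.exp (-(2 * Real.pi * Complex.I) * ((m * Δf * τ₀ : ℝ) : ℂ)) * X n m := by
  unfold tfModulation
  rw [crossAmbiguity_finsetSum_timeFreqShift _ _ _ _ hg hφ]
  calc _ = ∑ p ∈ range N ×ˢ range M, if p = (n, m) then
        X p.1 p.2 * Complex.exp (2 * Real.pi * Complex.I *
          ((p.2 * Δf * (n * T - τ₀ - p.1 * T) : ℝ) : ℂ)) else 0 := by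
        refine sum_congr rfl fun p hp => ?_
        obtain ⟨hn', hm'⟩ := mem_product.mp hp
        rw [show (n : ℝ) * T - τ₀ - p.1 * T = (n - p.1) * T - τ₀ by ring,
          show (m : ℝ) * Δf - ν₀ - p.2 * Δf = (m - p.2) * Δf - ν₀ by ring,
          hbiorth n p.1 m p.2 hn (mem_range.mp hn') hm (mem_range.mp hm'), mul_ite, mul_one,
          mul_zero]
        exact if_congr (Prod.ext_iff (y := (n, m))).symm rfl rfl
    _ = _ := by
        rw [sum_ite_eq', if_pos (mem_product.mpr ⟨mem_range.mpr hn, mem_range.mpr hm⟩),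
          mul_comm]
        congr 2
        push_cast
        ring

theorem tf_modulation_multiplicative_channel_general
    (g φ : ℝ → ℂ) (hg : MemLp g 2 (volume : Measure ℝ))
    (hφ : MemLp φ 2 (volume : Measure ℝ))
    (N M : ℕ)
    (T Δf : ℝ)
    (X : ℕ → ℕ → ℂ)
    (P : ℕ) (h : Fin P → ℂ) (τ ν : Fin P → ℝ)
    (x : ℝ → ℂ)
    (hx : ∀ t : ℝ, x t = ∑ n' ∈ Finset.range N, ∑ m' ∈ Finset.range M,
      X n' m' * φ (t - n' * T) *
        Complex.exp (2 * Real.pi * Complex.I * (((m' * Δf * (t - n' * T) : ℝ)) : ℂ)))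
    (y : ℝ → ℂ)
    (hy : ∀ t : ℝ, y t = ∑ i : Fin P,
      h i * Complex.exp (2 * Real.pi * Complex.I * ((ν i * (t - τ i) : ℝ) : ℂ)) *
        x (t - τ i))
    (hbiorth : ∀ i : Fin P, ∀ n n' m m' : ℕ, n < N → n' < N → m < M → m' < M →
      crossAmbiguity g φ (((n : ℝ) - (n' : ℝ)) * T - τ i)
          (((m : ℝ) - (m' : ℝ)) * Δf - ν i) =
        if n' = n ∧ m' = m then 1 else 0) :
    ∀ n < N, ∀ m < M,
      crossAmbiguity g y ((n : ℝ) * T) ((m : ℝ) * Δf) =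
        (∑ i : Fin P,
          h i * Complex.exp (2 * Real.pi * Complex.I * ((ν i * n * T : ℝ) : ℂ)) *
            Complex.exp (-(2 * Real.pi * Complex.I) *
              (((ν i + m * Δf) * τ i : ℝ) : ℂ))) * X n m := by
  intro n hn m hm
  have hx_mod : x = tfModulation φ T Δf N M X := funext fun t => by
    rw [hx, tfModulation, sum_product]
    exact sum_congr rfl fun n' _ => sum_congr rfl fun m' _ => by unfold timeFreqShift; ring
  have hy_chan : y = delayDopplerChannel h τ ν x := funext fun t => by
    rw [hy, delayDopplerChannel]
    exact sum_congr rfl fun i _ => by unfold timeFreqShift; ring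
  have hxL2 : MemLp x 2 volume := hx_mod ▸ memLp_finsetSum_timeFreqShift _ _ _ _ hφ
  rw [hy_chan]
  unfold delayDopplerChannel
  rw [crossAmbiguity_finsetSum_timeFreqShift _ _ _ _ hg hxL2, sum_mul]
  refine sum_congr rfl fun i _ => ?_
  rw [hx_mod, crossAmbiguity_tfModulation_of_biorthogonal hg hφ X (hbiorth i) hn hm]
  have hphase :
      Complex.exp (2 * Real.pi * Complex.I * ((ν i * (n * T - τ i) : ℝ) : ℂ)) *
        Complex.exp (-(2 * Real.pi * Complex.I) * ((m * Δf * τ i : ℝ) : ℂ)) =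
      Complex.exp (2 * Real.pi * Complex.I * ((ν i * n * T : ℝ) : ℂ)) *
        Complex.exp (-(2 * Real.pi * Complex.I) * (((ν i + m * Δf) * τ i : ℝ) : ℂ)) := by
    rw [← Complex.exp_add, ← Complex.exp_add]
    congr 1
    push_cast
    ring
  linear_combination h i * X n m * hphase

/-- Under bi-orthogonality of the transmit/receive pulses robust to the channel's
delay-Doppler shifts, time-frequency modulation renders the doubly-dispersive
channel multiplicative: `Y[n,m] = H[n,m] X[n,m]`. -/
theorem tf_modulation_multiplicative_channel
    (g φ : ℝ → ℂ) (hg : MemLp g 2 (volume : Measure ℝ))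
    (hφ : MemLp φ 2 (volume : Measure ℝ))
    (N M : ℕ) (hN : 0 < N) (hM : 0 < M)
    (T Δf : ℝ) (hT : 0 < T) (hΔf : 0 < Δf)
    (X : ℕ → ℕ → ℂ)
    (P : ℕ) (h : Fin P → ℂ) (τ ν : Fin P → ℝ)
    (x : ℝ → ℂ)
    (hx : ∀ t : ℝ, x t = ∑ n' ∈ Finset.range N, ∑ m' ∈ Finset.range M,
      X n' m' * φ (t - n' * T) *
        Complex.exp (2 * Real.pi * Complex.I * (((m' * Δf * (t - n' * T) : ℝ)) : ℂ)))
    (y : ℝ → ℂ)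
    (hy : ∀ t : ℝ, y t = ∑ i : Fin P,
      h i * Complex.exp (2 * Real.pi * Complex.I * ((ν i * (t - τ i) : ℝ) : ℂ)) *
        x (t - τ i))
    (hbiorth : ∀ i : Fin P, ∀ n n' m m' : ℕ, n < N → n' < N → m < M → m' < M →
      crossAmbiguity g φ (((n : ℝ) - (n' : ℝ)) * T - τ i)
          (((m : ℝ) - (m' : ℝ)) * Δf - ν i) =
        if n' = n ∧ m' = m then 1 else 0) :
    ∀ n < N, ∀ m < M,
      crossAmbiguity g y ((n : ℝ) * T) ((m : ℝ) * Δf) =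
        (∑ i : Fin P,
          h i * Complex.exp (2 * Real.pi * Complex.I * ((ν i * n * T : ℝ) : ℂ)) *
            Complex.exp (-(2 * Real.pi * Complex.I) *
              (((ν i + m * Δf) * τ i : ℝ) : ℂ))) * X n m :=
  tf_modulation_multiplicative_channel_general g φ hg hφ N M T Δf X P h τ ν x hx y hy hbiorth
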